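/- arXiv:0712.3676 — 2 statements merged into one kernel-verified Lean document; each statement's English description precedes it below -/
import Mathlib

section
/- Let C be a cocomplete closed symmetric monoidal category, A a commutative monoid object in C, q an ideal of A (a subobject of A in A-Mod), and f an element of the underlying set q₀ = Hom(1,q) whose image in A₀ is invertible in the monoid A₀. Then the inclusion q → A is an isomorphism. -/
open CategoryTheory CategoryTheory.Limits CategoryTheory.MonoidalCategory

universe v u

variable {C : Type u} [Category.{v} C] [MonoidalCategory C] [SymmetricCategory C]

/-- Product of two global elements of a monoid object: this is the monoid structure on
`A₀ = Hom(1, A)`. -/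
def mulHom (A : Mon C) (f g : 𝟙_ C ⟶ A.X) : 𝟙_ C ⟶ A.X :=
  (λ_ (𝟙_ C)).inv ≫ (f ⊗ₘ g) ≫ MonObj.mul (X := A.X)

/-- Invertibility of a global element in the monoid `A₀ = Hom(1, A)`. -/
def IsInvertibleEl (A : Mon C) (f : 𝟙_ C ⟶ A.X) : Prop :=
  ∃ g, mulHom A f g = MonObj.one (X := A.X) ∧ mulHom A g f = MonObj.one (X := A.X)

/-!
If `t ∈ q₀` maps to `1 ∈ A₀`, then `a ↦ a • t` is a module map `A ⟶ q` which is a section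
of the inclusion `j`; as `j` is mono, it is an isomorphism. Such a `t` is `g • f`, where `g`
is the inverse of the image of `f`.
-/

namespace CategoryTheory.Mod

variable {A : C} [MonObj A]

def toSpanSingleton (M : Mod C A) (t : 𝟙_ C ⟶ M.X) : regular A ⟶ M :=
  Hom.mk' ((ρ_ A).inv ≫ A ◁ t ≫ ModObj.smul (M := A) (X := M.X)) (by
    change MonObj.mul (X := A) ≫ (ρ_ A).inv ≫ A ◁ t ≫ ModObj.smul (M := A) (X := M.X) =
      A ◁ ((ρ_ A).inv ≫ A ◁ t ≫ ModObj.smul (M := A) (X := M.X)) ≫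
        ModObj.smul (M := A) (X := M.X)
    simp only [MonoidalCategory.whiskerLeft_comp, Category.assoc, ModObj.mul_smul_self_flip]
    slice_lhs 1 2 => rw [rightUnitor_inv_naturality]
    slice_lhs 2 3 => rw [← whisker_exchange]
    slice_rhs 2 3 => rw [associator_inv_naturality_right]
    simp only [Category.assoc]
    have : (ρ_ (A ⊗ A)).inv = A ◁ (ρ_ A).inv ≫ (α_ A A (𝟙_ C)).inv := by monoidal
    rw [this]
    simp)

theorem toSpanSingleton_comp {M N : Mod C A} (t : 𝟙_ C ⟶ M.X) (φ : M ⟶ N) :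
    toSpanSingleton M t ≫ φ = toSpanSingleton N (t ≫ φ.hom) := by
  ext
  change ((ρ_ A).inv ≫ A ◁ t ≫ ModObj.smul (M := A) (X := M.X)) ≫ φ.hom =
    (ρ_ A).inv ≫ A ◁ (t ≫ φ.hom) ≫ ModObj.smul (M := A) (X := N.X)
  simp [IsModHom.smul_hom]

theorem toSpanSingleton_regular_one :
    toSpanSingleton (regular A) (MonObj.one : 𝟙_ C ⟶ A) = 𝟙 _ := by
  ext
  change (ρ_ A).inv ≫ A ◁ MonObj.one ≫ MonObj.mul = 𝟙 A
  simp

def smulEl (M : Mod C A) (a : 𝟙_ C ⟶ A) (t : 𝟙_ C ⟶ M.X) : 𝟙_ C ⟶ M.X :=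
  (λ_ (𝟙_ C)).inv ≫ (a ⊗ₘ t) ≫ ModObj.smul (M := A)

theorem smulEl_comp {M N : Mod C A} (a : 𝟙_ C ⟶ A) (t : 𝟙_ C ⟶ M.X) (φ : M ⟶ N) :
    smulEl M a t ≫ φ.hom = smulEl N a (t ≫ φ.hom) := by
  have hφ : ModObj.smul (M := A) ≫ φ.hom = A ◁ φ.hom ≫ ModObj.smul (M := A) :=
    IsModHom.smul_hom
  simp only [smulEl, Category.assoc, hφ, tensorHom_comp_whiskerLeft_assoc]

theorem smulEl_regular (A : Mon C) (a b : 𝟙_ C ⟶ A.X) :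
    smulEl (regular A.X) a b = mulHom A a b :=
  rfl

theorem isIso_of_mono_of_comp_eq_one {M : Mod C A} (j : M ⟶ regular A) [Mono j]
    (t : 𝟙_ C ⟶ M.X) (ht : t ≫ j.hom = (MonObj.one : 𝟙_ C ⟶ A)) : IsIso j := by
  have hsection : toSpanSingleton M t ≫ j = 𝟙 _ := by
    rw [toSpanSingleton_comp, ht, toSpanSingleton_regular_one]
  have hretraction : j ≫ toSpanSingleton M t = 𝟙 _ := by
    rw [← cancel_mono j, Category.assoc, hsection, Category.comp_id, Category.id_comp]
  exact ⟨_, hretraction, hsection⟩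

end CategoryTheory.Mod

theorem ideal_eq_top_of_contains_invertible_general
    (A : CommMon C) (q : Mod C A.X)
    (j : q ⟶ Mod.regular A.X) (hj : Mono j)
    (f : 𝟙_ C ⟶ q.X) (hf : IsInvertibleEl A.toMon (f ≫ j.hom)) :
    IsIso j := by
  obtain ⟨g, -, hg⟩ := hf
  exact Mod.isIso_of_mono_of_comp_eq_one j (Mod.smulEl q g f)
    ((Mod.smulEl_comp g f j).trans ((Mod.smulEl_regular A.toMon g (f ≫ j.hom)).trans hg))

/-- If `q` is an ideal of a commutative monoid object `A` (a subobject of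
`A` in `A`-Mod, given by a monomorphism `j : q ⟶ A`), and `f ∈ q₀` has invertible image
in the monoid `A₀ = Hom(1, A)`, then the inclusion `j` is an isomorphism. -/
theorem ideal_eq_top_of_contains_invertible
    [MonoidalClosed C] [HasLimits C] [HasColimits C]
    (A : CommMon C) (q : Mod C A.X)
    (j : q ⟶ Mod.regular A.X) (hj : Mono j)
    (f : 𝟙_ C ⟶ q.X) (hf : IsInvertibleEl A.toMon (f ≫ j.hom)) :
    IsIso j :=
  ideal_eq_top_of_contains_invertible_general A q j hj f hf
end

section
/- Let C be a cocomplete closed symmetric monoidal category, A a commutative monoid object, and f ∈ A₀ := Hom(1,A). The sequential colimit B := colim(A → A → A → ...) along the multiplication-by-f morphism φ(f) : A → A carries a commutative monoid structure under which it satisfies the universal property of the localization A_f: the image of f in B₀ is invertible, and any monoid morphism A → C sending f to an invertible element of C₀ factors uniquely through A → B. -/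
open CategoryTheory CategoryTheory.Limits CategoryTheory.MonoidalCategory

universe v u

variable {C : Type u} [Category.{v} C] [MonoidalCategory C] [SymmetricCategory C]

/-- The multiplication-by-`f` endomorphism `φ(f) = m_A ∘ (id_A ⊗ f) ∘ r_A⁻¹` of `A`. -/
def phi (A : Mon C) (f : 𝟙_ C ⟶ A.X) : A.X ⟶ A.X :=
  (ρ_ A.X).inv ≫ (A.X ◁ f) ≫ MonObj.mul (X := A.X)

/-!
Write `B = colim (A → A → ⋯)` along `φ(f)`, and think of the `n`-th copy of `A` as the fractions
`a / fⁿ`. Since `φ(f)` is `A`-linear on both sides (`A` is commutative), the products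
`A_n ⊗ A_m → A_{n+m}` are compatible with the transition maps; tensoring preserves the sequential
colimit (`C` is closed), so they glue to a commutative multiplication on `B`, with unit `1 / f⁰`.
The inverse of `f / f⁰` is `1 / f¹`. A monoid morphism `h : A → D` with `h f · g = 1` induces
`B → D` by `a / fⁿ ↦ h a · gⁿ`. It is unique because, for any monoid morphism `w : B → D`, the
stage `n` is recovered from the stage `n + 1` through multiplication by `w (f / f⁰)`, which is a
split monomorphism as `f / f⁰` is invertible.
-/

section

open scoped MonObj

section Monoidal

omit [SymmetricCategory C]

variable (M : Mon C) (x y : 𝟙_ C ⟶ M.X)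

lemma whiskerLeft_phi_comp_mul : (M.X ◁ phi M x) ≫ μ[M.X] = μ[M.X] ≫ phi M x := by
  have coh : M.X ◁ (ρ_ M.X).inv ≫ (α_ M.X M.X (𝟙_ C)).inv = (ρ_ (M.X ⊗ M.X)).inv := by
    monoidal_coherence
  rw [phi, MonoidalCategory.whiskerLeft_comp, MonoidalCategory.whiskerLeft_comp,
    Category.assoc, Category.assoc, MonObj.mul_assoc_flip,
    associator_inv_naturality_right_assoc, whisker_exchange_assoc,
    reassoc_of% coh, ← rightUnitor_inv_naturality_assoc]

lemma one_comp_phi : η[M.X] ≫ phi M x = x := by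
  rw [phi, rightUnitor_inv_naturality_assoc, ← whisker_exchange_assoc, MonObj.one_mul,
    leftUnitor_naturality, ← unitors_inv_equal]
  simp

lemma phi_one : phi M η[M.X] = 𝟙 M.X := by
  simp [phi]

lemma phi_comp_hom {N : Mon C} (u : M ⟶ N) : phi M x ≫ u.hom = u.hom ≫ phi N (x ≫ u.hom) := by
  rw [phi, phi, Category.assoc, Category.assoc, IsMonHom.mul_hom, tensorHom_def'_assoc,
    ← MonoidalCategory.whiskerLeft_comp_assoc, whisker_exchange_assoc,
    ← rightUnitor_inv_naturality_assoc]

lemma mulHom_eq_comp_phi : mulHom M x y = x ≫ phi M y := by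
  rw [phi, rightUnitor_inv_naturality_assoc, ← tensorHom_def_assoc, mulHom, unitors_inv_equal]

lemma phi_comp_phi : phi M x ≫ phi M y = phi M (mulHom M x y) := by
  rw [mulHom_eq_comp_phi]
  conv_rhs => rw [phi]
  rw [MonoidalCategory.whiskerLeft_comp_assoc, whiskerLeft_phi_comp_mul]
  conv_lhs => rw [phi]
  simp

lemma phi_comp_phi_eq_id (h : mulHom M x y = η[M.X]) : phi M x ≫ phi M y = 𝟙 M.X := by
  rw [phi_comp_phi, h, phi_one]

lemma mono_phi_of_mulHom_eq_one (h : mulHom M x y = η[M.X]) : Mono (phi M x) :=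
  (IsSplitMono.mk' ⟨phi M y, phi_comp_phi_eq_id M x y h⟩).mono

lemma mulHom_comp_hom {N : Mon C} (u : M ⟶ N) :
    mulHom M x y ≫ u.hom = mulHom N (x ≫ u.hom) (y ≫ u.hom) := by
  rw [mulHom_eq_comp_phi, mulHom_eq_comp_phi, Category.assoc, phi_comp_hom, Category.assoc]

end Monoidal

lemma CategoryTheory.End.pow_comp_eq_comp_pow {E : Type*} [Category E] {X Y : E}
    {a : End X} {b : End Y} {p : X ⟶ Y} (h : a ≫ p = p ≫ b) (n : ℕ) :
    (a ^ n : End X) ≫ p = p ≫ (b ^ n : End Y) := by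
  induction n with
  | zero => simp [End.one_def]
  | succ n ih => rw [pow_succ, pow_succ, End.mul_def, End.mul_def, Category.assoc, ih,
      reassoc_of% h]

section Commutative

variable (M : Mon C) [IsCommMonObj M.X] (x : 𝟙_ C ⟶ M.X)

lemma whiskerRight_phi_comp_mul : (phi M x ▷ M.X) ≫ μ[M.X] = μ[M.X] ≫ phi M x := by
  rw [← IsCommMonObj.mul_comm, BraidedCategory.braiding_naturality_left_assoc,
    whiskerLeft_phi_comp_mul, IsCommMonObj.mul_comm_assoc, IsCommMonObj.mul_comm]

lemma tensorHom_phi_pow_comp_mul (n m : ℕ) :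
    ((End.of (phi M x) ^ n) ⊗ₘ (End.of (phi M x) ^ m)) ≫ μ[M.X] =
      μ[M.X] ≫ End.of (phi M x) ^ (n + m) := by
  have hl := End.pow_comp_eq_comp_pow (a := End.of (M.X ◁ phi M x))
    (whiskerLeft_phi_comp_mul M x) m
  have hr := End.pow_comp_eq_comp_pow (a := End.of (phi M x ▷ M.X))
    (whiskerRight_phi_comp_mul M x) n
  have hl' : M.X ◁ (End.of (phi M x) ^ m) = End.of (M.X ◁ phi M x) ^ m :=
    map_pow (Functor.mapEnd M.X (tensorLeft M.X)) _ _
  have hr' : (End.of (phi M x) ^ n) ▷ M.X = End.of (phi M x ▷ M.X) ^ n :=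
    map_pow (Functor.mapEnd M.X (tensorRight M.X)) _ _
  rw [tensorHom_def_assoc, hl', hl, hr', reassoc_of% hr, add_comm n m, pow_add, End.mul_def]

end Commutative

def coconeOfSucc {E : Type*} [Category E] (G : ℕ ⥤ E) {Z : E} (c : ∀ n, G.obj n ⟶ Z)
    (hc : ∀ n, G.map (homOfLE (Nat.le_add_right n 1)) ≫ c (n + 1) = c n) : Cocone G :=
  Cocone.mk Z (NatTrans.ofSequence c fun n => by simpa using hc n)

lemma colimit_map_hom_ext {E E' : Type*} [Category E] [Category E'] {J : Type*} [Category J]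
    {F : J ⥤ E} [HasColimit F] (G : E ⥤ E') [PreservesColimit F G] {Y : E'}
    {u v : G.obj (colimit F) ⟶ Y}
    (h : ∀ j, G.map (colimit.ι F j) ≫ u = G.map (colimit.ι F j) ≫ v) : u = v :=
  (isColimitOfPreserves G (colimit.isColimit F)).hom_ext h

section TensorColimit

variable {J : Type*} [Category J] [HasColimitsOfShape J C]
  [∀ X : C, PreservesColimitsOfShape J (tensorLeft X)]

lemma colimit_tensor_hom_ext {F G : J ⥤ C} {Y : C} {u v : colimit F ⊗ colimit G ⟶ Y}
    (h : ∀ j k, (colimit.ι F j ⊗ₘ colimit.ι G k) ≫ u = (colimit.ι F j ⊗ₘ colimit.ι G k) ≫ v) :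
    u = v := by
  refine colimit_map_hom_ext (tensorRight (colimit G)) fun j => ?_
  refine colimit_map_hom_ext (tensorLeft (F.obj j)) fun k => ?_
  simpa only [curriedTensor_obj_map, Functor.flip_obj_map, curriedTensor_map_app,
    ← tensorHom_def'_assoc] using h j k

lemma colimit_tensor_tensor_hom_ext {F G H : J ⥤ C} {Y : C}
    {u v : (colimit F ⊗ colimit G) ⊗ colimit H ⟶ Y}
    (h : ∀ j k l, ((colimit.ι F j ⊗ₘ colimit.ι G k) ⊗ₘ colimit.ι H l) ≫ u =
      ((colimit.ι F j ⊗ₘ colimit.ι G k) ⊗ₘ colimit.ι H l) ≫ v) :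
    u = v := by
  refine colimit_map_hom_ext (tensorLeft (colimit F ⊗ colimit G)) fun l => ?_
  refine colimit_map_hom_ext (tensorRight (colimit G) ⋙ tensorRight (H.obj l)) fun j => ?_
  refine colimit_map_hom_ext (tensorLeft (F.obj j) ⋙ tensorRight (H.obj l)) fun k => ?_
  simp only [Functor.comp_map, curriedTensor_obj_map, Functor.flip_obj_map,
    curriedTensor_map_app, ← comp_whiskerRight_assoc, ← tensorHom_def']
  simpa only [tensorHom_def_assoc] using h j k l

end TensorColimit

namespace LocalizationAway

section Monoidal

omit [SymmetricCategory C]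

variable (M : Mon C) (x : 𝟙_ C ⟶ M.X)

abbrev diagram : ℕ ⥤ C :=
  Functor.ofSequence (X := fun _ : ℕ => M.X) (fun _ => phi M x)

variable [HasColimitsOfShape ℕ C]

/-- `incl M x n a` is the fraction `a / xⁿ`. -/
noncomputable abbrev incl (n : ℕ) : M.X ⟶ colimit (diagram M x) := colimit.ι (diagram M x) n

lemma phi_comp_incl_succ (n : ℕ) : phi M x ≫ incl M x (n + 1) = incl M x n := by
  have h := colimit.w (diagram M x) (homOfLE (Nat.le_add_right n 1))
  rwa [Functor.ofSequence_map_homOfLE_succ] at h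

section Lift

variable {D : Mon C} (h : M ⟶ D) (g : 𝟙_ C ⟶ D.X)

noncomputable def liftHom (hg : mulHom D (x ≫ h.hom) g = η[D.X]) :
    colimit (diagram M x) ⟶ D.X :=
  colimit.desc _ <| coconeOfSucc _ (fun n => h.hom ≫ End.of (phi D g) ^ n) fun n => by
    rw [Functor.ofSequence_map_homOfLE_succ]
    change phi M x ≫ h.hom ≫ _ = _
    rw [reassoc_of% (phi_comp_hom M x h), pow_succ, End.mul_def,
      reassoc_of% (phi_comp_phi_eq_id D _ _ hg)]
    rfl

variable (hg : mulHom D (x ≫ h.hom) g = η[D.X])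

lemma incl_liftHom (n : ℕ) : incl M x n ≫ liftHom M x h g hg = h.hom ≫ End.of (phi D g) ^ n :=
  colimit.ι_desc _ _

end Lift

variable [∀ X : C, PreservesColimitsOfShape ℕ (tensorLeft X)]

lemma whiskerLeft_hom_ext {Z Y : C} {u v : Z ⊗ colimit (diagram M x) ⟶ Y}
    (h : ∀ n, Z ◁ incl M x n ≫ u = Z ◁ incl M x n ≫ v) : u = v :=
  colimit_map_hom_ext (tensorLeft Z) h

noncomputable def mulLeft (n : ℕ) : M.X ⊗ colimit (diagram M x) ⟶ colimit (diagram M x) :=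
  (isColimitOfPreserves (tensorLeft M.X) (colimit.isColimit _)).desc <|
    coconeOfSucc _ (fun m => μ[M.X] ≫ incl M x (n + m)) fun m => by
      simp only [Functor.comp_map, Functor.ofSequence_map_homOfLE_succ]
      change M.X ◁ phi M x ≫ μ[M.X] ≫ incl M x (n + m + 1) = _
      rw [reassoc_of% (whiskerLeft_phi_comp_mul M x), phi_comp_incl_succ]
      rfl

lemma whiskerLeft_incl_mulLeft (n m : ℕ) :
    M.X ◁ incl M x m ≫ mulLeft M x n = μ[M.X] ≫ incl M x (n + m) :=
  (isColimitOfPreserves (tensorLeft M.X) (colimit.isColimit _)).fac _ m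

end Monoidal

variable (M : Mon C) (x : 𝟙_ C ⟶ M.X) [HasColimitsOfShape ℕ C]
  [∀ X : C, PreservesColimitsOfShape ℕ (tensorLeft X)]

lemma whiskerRight_hom_ext {Z Y : C} {u v : colimit (diagram M x) ⊗ Z ⟶ Y}
    (h : ∀ n, incl M x n ▷ Z ≫ u = incl M x n ▷ Z ≫ v) : u = v :=
  colimit_map_hom_ext (tensorRight Z) h

lemma tensor_hom_ext {Y : C} {u v : colimit (diagram M x) ⊗ colimit (diagram M x) ⟶ Y}
    (h : ∀ n m, (incl M x n ⊗ₘ incl M x m) ≫ u = (incl M x n ⊗ₘ incl M x m) ≫ v) : u = v :=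
  colimit_tensor_hom_ext h

lemma tensor_tensor_hom_ext {Y : C}
    {u v : (colimit (diagram M x) ⊗ colimit (diagram M x)) ⊗ colimit (diagram M x) ⟶ Y}
    (h : ∀ n m k, ((incl M x n ⊗ₘ incl M x m) ⊗ₘ incl M x k) ≫ u =
      ((incl M x n ⊗ₘ incl M x m) ⊗ₘ incl M x k) ≫ v) : u = v :=
  colimit_tensor_tensor_hom_ext h

variable [IsCommMonObj M.X]

noncomputable def mul : colimit (diagram M x) ⊗ colimit (diagram M x) ⟶ colimit (diagram M x) :=
  (isColimitOfPreserves (tensorRight _) (colimit.isColimit _)).desc <|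
    coconeOfSucc _ (mulLeft M x) fun n => by
      simp only [Functor.comp_map, Functor.ofSequence_map_homOfLE_succ]
      refine whiskerLeft_hom_ext M x fun m => ?_
      change M.X ◁ incl M x m ≫ phi M x ▷ _ ≫ mulLeft M x (n + 1) =
        M.X ◁ incl M x m ≫ mulLeft M x n
      rw [whisker_exchange_assoc, whiskerLeft_incl_mulLeft, whiskerLeft_incl_mulLeft,
        reassoc_of% (whiskerRight_phi_comp_mul M x), add_right_comm, phi_comp_incl_succ]

lemma incl_whiskerRight_mul (n : ℕ) :
    incl M x n ▷ colimit (diagram M x) ≫ mul M x = mulLeft M x n :=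
  (isColimitOfPreserves (tensorRight _) (colimit.isColimit _)).fac _ n

lemma incl_tensorHom_incl_mul (n m : ℕ) :
    (incl M x n ⊗ₘ incl M x m) ≫ mul M x = μ[M.X] ≫ incl M x (n + m) := by
  rw [tensorHom_def'_assoc, incl_whiskerRight_mul, whiskerLeft_incl_mulLeft]

noncomputable instance : MonObj (colimit (diagram M x)) where
  one := η[M.X] ≫ incl M x 0
  mul := mul M x
  one_mul := by
    refine whiskerLeft_hom_ext M x fun m => ?_
    rw [← tensorHom_def'_assoc, ← Category.id_comp (incl M x m), ← tensorHom_comp_tensorHom_assoc,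
      incl_tensorHom_incl_mul, tensorHom_id, MonObj.one_mul_assoc, zero_add, Category.id_comp,
      leftUnitor_naturality]
  mul_one := by
    refine whiskerRight_hom_ext M x fun n => ?_
    rw [← tensorHom_def_assoc, ← Category.id_comp (incl M x n), ← tensorHom_comp_tensorHom_assoc,
      incl_tensorHom_incl_mul, id_tensorHom, MonObj.mul_one_assoc, add_zero, Category.id_comp,
      rightUnitor_naturality]
  mul_assoc := by
    refine tensor_tensor_hom_ext M x fun n m k => ?_
    conv_lhs => rw [← tensorHom_id, tensorHom_comp_tensorHom_assoc, incl_tensorHom_incl_mul,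
      Category.comp_id, tensorHom_def_assoc, MonoidalCategory.comp_whiskerRight, Category.assoc,
      ← tensorHom_def_assoc, incl_tensorHom_incl_mul, MonObj.mul_assoc_assoc, add_assoc]
    conv_rhs => rw [associator_naturality_assoc, ← id_tensorHom, tensorHom_comp_tensorHom_assoc,
      Category.comp_id, incl_tensorHom_incl_mul, tensorHom_def'_assoc,
      MonoidalCategory.whiskerLeft_comp, Category.assoc, ← tensorHom_def'_assoc,
      incl_tensorHom_incl_mul]

instance : IsCommMonObj (colimit (diagram M x)) where
  mul_comm := tensor_hom_ext M x fun n m => by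
    change _ ≫ _ ≫ mul M x = _ ≫ mul M x
    rw [BraidedCategory.braiding_naturality_assoc, incl_tensorHom_incl_mul,
      incl_tensorHom_incl_mul, IsCommMonObj.mul_comm_assoc, add_comm]

noncomputable abbrev obj : Mon C := Mon.mk (colimit (diagram M x))

noncomputable abbrev commObj : CommMon C := CommMon.mk (colimit (diagram M x))

noncomputable def toObj : M ⟶ obj M x :=
  Mon.Hom.mk' (incl M x 0) rfl (incl_tensorHom_incl_mul M x 0 0).symm

lemma toObj_hom : (toObj M x).hom = incl M x 0 := rfl

lemma incl_comp_phi (y : 𝟙_ C ⟶ M.X) (n m : ℕ) :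
    incl M x n ≫ phi (obj M x) (y ≫ incl M x m) = phi M y ≫ incl M x (n + m) := by
  change incl M x n ≫ (ρ_ _).inv ≫ _ ◁ (y ≫ incl M x m) ≫ mul M x = _
  rw [rightUnitor_inv_naturality_assoc, ← tensorHom_def_assoc, ← Category.id_comp (incl M x n),
    ← tensorHom_comp_tensorHom_assoc, incl_tensorHom_incl_mul, id_tensorHom, phi,
    Category.assoc, Category.assoc]

lemma isInvertibleEl_toObj : IsInvertibleEl (obj M x) (x ≫ (toObj M x).hom) := by
  have hx : x ≫ incl M x 1 = η[M.X] ≫ incl M x 0 := by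
    rw [← phi_comp_incl_succ M x 0, reassoc_of% (one_comp_phi M x)]
  refine ⟨η[M.X] ≫ incl M x 1, ?_, ?_⟩
  · rw [mulHom_eq_comp_phi, toObj_hom, Category.assoc, incl_comp_phi, zero_add, phi_one,
      Category.id_comp, hx]
    rfl
  · rw [mulHom_eq_comp_phi, Category.assoc, toObj_hom, incl_comp_phi, add_zero,
      phi_comp_incl_succ]
    rfl

lemma incl_succ_comp_phi {D : Mon C} (w : obj M x ⟶ D) (n : ℕ) :
    incl M x (n + 1) ≫ w.hom ≫ phi D (x ≫ (toObj M x ≫ w).hom) = incl M x n ≫ w.hom := by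
  rw [Mon.comp_hom', ← Category.assoc x, ← phi_comp_hom, ← Category.assoc, toObj_hom,
    incl_comp_phi, add_zero, phi_comp_incl_succ]

lemma toObj_hom_ext {D : Mon C} {w w' : obj M x ⟶ D} (h : toObj M x ≫ w = toObj M x ≫ w') :
    w = w' := by
  obtain ⟨u, hu, -⟩ := isInvertibleEl_toObj M x
  have : Mono (phi D (x ≫ (toObj M x ≫ w).hom)) := by
    refine mono_phi_of_mulHom_eq_one D _ (u ≫ w.hom) ?_
    rw [Mon.comp_hom', ← Category.assoc, ← mulHom_comp_hom, hu, IsMonHom.one_hom]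
  refine Mon.Hom.ext (colimit.hom_ext fun n => ?_)
  change incl M x n ≫ w.hom = incl M x n ≫ w'.hom
  induction n with
  | zero => exact congrArg Mon.Hom.hom h
  | succ n ih =>
    rw [← cancel_mono (phi D (x ≫ (toObj M x ≫ w).hom)), Category.assoc, incl_succ_comp_phi, ih,
      h, Category.assoc, incl_succ_comp_phi]

variable {D : Mon C} [IsCommMonObj D.X] (h : M ⟶ D) (g : 𝟙_ C ⟶ D.X)
  (hg : mulHom D (x ≫ h.hom) g = η[D.X])

noncomputable def lift : obj M x ⟶ D :=
  Mon.Hom.mk' (liftHom M x h g hg)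
    (by
      change (η[M.X] ≫ incl M x 0) ≫ _ = _
      rw [Category.assoc, incl_liftHom, pow_zero, End.one_def, Category.comp_id,
        IsMonHom.one_hom])
    (tensor_hom_ext M x fun n m => by
      change _ ≫ mul M x ≫ _ = _
      rw [reassoc_of% (incl_tensorHom_incl_mul M x n m), incl_liftHom,
        tensorHom_comp_tensorHom_assoc, incl_liftHom, incl_liftHom,
        ← tensorHom_comp_tensorHom_assoc, tensorHom_phi_pow_comp_mul, IsMonHom.mul_hom_assoc])

lemma toObj_comp_lift : toObj M x ≫ lift M x h g hg = h :=
  Mon.Hom.ext ((incl_liftHom M x h g hg 0).trans (Category.comp_id _))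

end LocalizationAway

end

/-- For a commutative monoid object `A` in a cocomplete closed symmetric
monoidal category, and `f ∈ A₀`, the sequential colimit `B = colim (A → A → ⋯)` along
`φ(f)` carries a commutative monoid structure satisfying the universal property of the
localization `A_f`: the image of `f` in `B₀` is invertible and any morphism of
commutative monoid objects `A ⟶ D` inverting `f` factors uniquely through `A ⟶ B`. -/
theorem localization_as_sequential_colimit
    [MonoidalClosed C] [HasColimits C]
    (A : CommMon C) (f : 𝟙_ C ⟶ A.X) :
    ∃ (B : CommMon C) (η : A ⟶ B)
      (iso : B.X ≅ colimit (Functor.ofSequence (X := fun _ : ℕ => A.X)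
        (fun _ => phi A.toMon f))),
      η.hom.hom ≫ iso.hom = colimit.ι (Functor.ofSequence (X := fun _ : ℕ => A.X)
        (fun _ => phi A.toMon f)) 0 ∧
      IsInvertibleEl B.toMon (f ≫ η.hom.hom) ∧
      ∀ (D : CommMon C) (h : A ⟶ D), IsInvertibleEl D.toMon (f ≫ h.hom.hom) →
        ∃! v : B ⟶ D, η ≫ v = h := by
  let : IsCommMonObj A.toMon.X := A.comm
  refine ⟨LocalizationAway.commObj A.toMon f,
    CommMon.homMk (LocalizationAway.toObj A.toMon f), Iso.refl _, Category.comp_id _,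
    LocalizationAway.isInvertibleEl_toObj A.toMon f, ?_⟩
  rintro D h ⟨g, hg, -⟩
  let : IsCommMonObj D.toMon.X := D.comm
  have hlift := LocalizationAway.toObj_comp_lift A.toMon f h.hom g hg
  refine ⟨CommMon.homMk (LocalizationAway.lift A.toMon f h.hom g hg),
    InducedCategory.hom_ext hlift, fun w hw => InducedCategory.hom_ext ?_⟩
  exact LocalizationAway.toObj_hom_ext A.toMon f
    ((congrArg InducedCategory.Hom.hom hw).trans hlift.symm)
end
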